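/- Let x₋, x₊ : ℝ → ℝ³ be C³ functions with x₋(0) = x₊(0) and x₋'(0) = x₊'(0) (but possibly x₋''(0) ≠ x₊''(0)), and let x : ℝ → ℝ³ equal x₋ on (−∞,0] and x₊ on [0,∞), so x is C¹ with a possible jump in the second derivative at t = 0. Assume x' is compactly supported and |x'(t)| ≤ v₀ < 1 for all t, and define J(p) = ∫_ℝ x'(t) e^{iψ(p,t)} dt. Then there is a constant C with |J(p)| ≤ C/|p|² for all |p| ≥ 1, and consequently ∫_{ℝ³} |J(p)|² dp/(2|p|) < ∞. -/

import Mathlib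

open MeasureTheory Complex

noncomputable section

abbrev E3 := EuclideanSpace ℝ (Fin 3)
abbrev C3 := EuclideanSpace ℂ (Fin 3)

/-- The inclusion `ℝ³ → ℂ³`. -/
def cmap (v : E3) : C3 := WithLp.toLp 2 (fun i => (v i : ℂ))

/-- The phase `ψ(p,t) = |p| t − p·x(t)`. -/
def psi (x : ℝ → E3) (p : E3) (t : ℝ) : ℝ := ‖p‖ * t - (inner ℝ p (x t) : ℝ)

/-- The radiation amplitude `J(p) = ∫ x'(t) e^{iψ(p,t)} dt`. -/
def Jrad (x : ℝ → E3) (p : E3) : C3 :=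
  ∫ t : ℝ, Complex.exp (Complex.I * (psi x p t : ℂ)) • cmap (deriv x t)

lemma cmap_norm (v : E3) : ‖cmap v‖ = ‖v‖ := by
  simp [cmap, EuclideanSpace.norm_eq]
lemma cmap_add (u v : E3) : cmap (u + v) = cmap u + cmap v := by ext i; simp [cmap]
lemma cmap_smul (c : ℝ) (v : E3) : cmap (c • v) = (c : ℂ) • cmap v := by
  ext i; simp [cmap, Complex.real_smul]
def cmapCLM : E3 →L[ℝ] C3 :=
  LinearMap.mkContinuous
    { toFun := cmap
      map_add' := cmap_add
      map_smul' := by intro c v; simpa [Complex.real_smul] using cmap_smul c v }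
    1 (by intro v; simp [cmap_norm])
@[simp] lemma cmapCLM_apply (v : E3) : cmapCLM v = cmap v := rfl
lemma cmap_zero : cmap (0 : E3) = 0 := by ext i; simp [cmap]

/-- boundary term of the first integration by parts -/
def bdry (y : ℝ → E3) (p : E3) (t : ℝ) : C3 :=
  Complex.exp (Complex.I * (psi y p t : ℂ)) •
    ((Complex.I * ((‖p‖ - (inner ℝ p (deriv y t) : ℝ) : ℝ) : ℂ))⁻¹ • cmap (deriv y t))

lemma norm_eexp (a : ℝ) : ‖Complex.exp (Complex.I * (a : ℂ))‖ = 1 := by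
  rw [Complex.norm_exp]
  simp

set_option maxHeartbeats 1600000 in
lemma key (y : ℝ → E3) (hy : ContDiff ℝ 3 y) (a b : ℝ) (hab : a ≤ b)
    (v₀ : ℝ) (hv₁ : v₀ < 1) (hv : ∀ t ∈ Set.Icc a b, ‖deriv y t‖ ≤ v₀) :
    ∃ K : ℝ, 0 ≤ K ∧ ∀ p : E3, 1 ≤ ‖p‖ →
      ‖(∫ t in a..b, Complex.exp (Complex.I * (psi y p t : ℂ)) • cmap (deriv y t))
        - (bdry y p b - bdry y p a)‖ ≤ K / ‖p‖ ^ 2 := by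
  -- derivatives of y
  set y1 := deriv y with hy1def
  have hy1 : ContDiff ℝ 2 y1 := ((contDiff_succ_iff_deriv (n := 2)).mp (by exact_mod_cast hy)).2.2
  set y2 := deriv y1 with hy2def
  have hy2 : ContDiff ℝ 1 y2 := ((contDiff_succ_iff_deriv (n := 1)).mp (by exact_mod_cast hy1)).2.2
  set y3 := deriv y2 with hy3def
  have hy3c : Continuous y3 := (contDiff_one_iff_deriv.mp hy2).2
  have hy1c : Continuous y1 := hy1.continuous
  have hy2c : Continuous y2 := hy2.continuous
  -- bounds
  obtain ⟨M₂', hM₂'⟩ := isCompact_Icc.exists_bound_of_continuousOn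
    (s := Set.Icc a b) hy2c.continuousOn
  obtain ⟨M₃', hM₃'⟩ := isCompact_Icc.exists_bound_of_continuousOn
    (s := Set.Icc a b) hy3c.continuousOn
  set M₂ := max M₂' 0 with hM₂def
  set M₃ := max M₃' 0 with hM₃def
  have hM₂ : ∀ t ∈ Set.Icc a b, ‖y2 t‖ ≤ M₂ := fun t ht => (hM₂' t ht).trans (le_max_left _ _)
  have hM₃ : ∀ t ∈ Set.Icc a b, ‖y3 t‖ ≤ M₃ := fun t ht => (hM₃' t ht).trans (le_max_left _ _)
  have hM₂0 : 0 ≤ M₂ := le_max_right _ _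
  have hM₃0 : 0 ≤ M₃ := le_max_right _ _
  have hv₀0 : 0 ≤ v₀ := le_trans (norm_nonneg _) (hv a ⟨le_refl a, hab⟩)
  set c := 1 - v₀ with hcdef
  have hc : 0 < c := by simp [hcdef]; linarith
  set a1 : ℝ := M₂ / c ^ 2 + M₂ / c with ha1def
  set a2 : ℝ := (M₃ / c ^ 2 + 2 * M₂ ^ 2 / c ^ 3) + 2 * (M₂ ^ 2 / c ^ 2) + M₃ / c with ha2def
  set bb : ℝ := (M₂ / c ^ 2) * a1 + a2 / c with hbbdef
  have ha10 : 0 ≤ a1 := by positivity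
  have ha20 : 0 ≤ a2 := by positivity
  have hbb0 : 0 ≤ bb := by positivity
  refine ⟨2 * (a1 / c) + (b - a) * bb, by
    have h1 : 0 ≤ a1 / c := div_nonneg ha10 hc.le
    have h2 : 0 ≤ (b - a) * bb := mul_nonneg (by linarith) hbb0
    exact add_nonneg (mul_nonneg (by norm_num) h1) h2, ?_⟩
  intro p hp
  have hP : (0:ℝ) < ‖p‖ := lt_of_lt_of_le one_pos hp
  set P := ‖p‖ with hPdef
  -- scalar phase functions
  set q : ℝ → ℝ := fun t => P - (inner ℝ p (y1 t) : ℝ) with hqdef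
  set z : ℝ → ℂ := fun t => Complex.I * (q t : ℂ) with hzdef
  set r : ℝ → ℝ := fun t => (inner ℝ p (y2 t) : ℝ) with hrdef
  set s : ℝ → ℝ := fun t => (inner ℝ p (y3 t) : ℝ) with hsdef
  have hinnerbd : ∀ t ∈ Set.Icc a b, |(inner ℝ p (y1 t) : ℝ)| ≤ P * v₀ := by
    intro t ht
    exact (abs_real_inner_le_norm p (y1 t)).trans
      (mul_le_mul_of_nonneg_left (hv t ht) (norm_nonneg p))
  have hql : ∀ t ∈ Set.Icc a b, c * P ≤ q t := by
    intro t ht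
    have h1 := (abs_le.mp (hinnerbd t ht)).2
    have h2 : c * P = P - P * v₀ := by rw [hcdef]; ring
    simp only [hqdef]
    linarith
  have hq0 : ∀ t ∈ Set.Icc a b, 0 < q t := fun t ht =>
    lt_of_lt_of_le (mul_pos hc hP) (hql t ht)
  have hqu : ∀ t ∈ Set.Icc a b, q t ≤ 2 * P := by
    intro t ht
    have h1 := (abs_le.mp (hinnerbd t ht)).1
    have h2 : P * v₀ ≤ P * 1 := mul_le_mul_of_nonneg_left (le_of_lt hv₁) (le_of_lt hP)
    simp only [hqdef]
    linarith
  have hz0 : ∀ t ∈ Set.Icc a b, z t ≠ 0 := by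
    intro t ht
    simp only [hzdef, mul_ne_zero_iff]
    exact ⟨Complex.I_ne_zero, by exact_mod_cast (hq0 t ht).ne'⟩
  have hznorm : ∀ t ∈ Set.Icc a b, ‖z t‖ = q t := by
    intro t ht
    simp only [hzdef, norm_mul, Complex.norm_I, one_mul, Complex.norm_real,
      Real.norm_eq_abs, abs_of_pos (hq0 t ht)]
  -- pointwise derivative facts
  have hyd : ∀ t, HasDerivAt y (y1 t) t := fun t =>
    (hy.differentiable (by norm_num) t).hasDerivAt
  have hy1d : ∀ t, HasDerivAt y1 (y2 t) t := fun t =>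
    (hy1.differentiable (by norm_num) t).hasDerivAt
  have hy2d : ∀ t, HasDerivAt y2 (y3 t) t := fun t =>
    (hy2.differentiable (by norm_num) t).hasDerivAt
  have hinner1 : ∀ t, HasDerivAt (fun t => (inner ℝ p (y1 t) : ℝ)) (r t) t := by
    intro t
    simpa [hrdef] using (hasDerivAt_const t p).inner ℝ (hy1d t)
  have hinner2 : ∀ t, HasDerivAt (fun t => (inner ℝ p (y2 t) : ℝ)) (s t) t := by
    intro t
    simpa [hsdef] using (hasDerivAt_const t p).inner ℝ (hy2d t)
  have hqd : ∀ t, HasDerivAt q (-(r t)) t := fun t => (hinner1 t).const_sub P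
  have hzd : ∀ t, HasDerivAt z (-(Complex.I * (r t : ℂ))) t := by
    intro t
    have := ((hqd t).ofReal_comp).const_mul Complex.I
    simpa [hzdef, mul_comm] using this
  -- scalar auxiliary functions
  set u : ℝ → ℂ := fun t => (z t)⁻¹ with hudef
  set u1 : ℝ → ℂ := fun t => (Complex.I * (r t : ℂ)) / (z t) ^ 2 with hu1def
  set u2 : ℝ → ℂ := fun t => (Complex.I * (s t : ℂ)) / (z t) ^ 2
    + 2 * (Complex.I * (r t : ℂ)) ^ 2 / (z t) ^ 3 with hu2def
  have hrd : ∀ t, HasDerivAt (fun t => (Complex.I * (r t : ℂ))) (Complex.I * (s t : ℂ)) t := by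
    intro t
    have h0 : HasDerivAt r (s t) t := hinner2 t
    simpa [mul_comm] using (h0.ofReal_comp).const_mul Complex.I
  have hud : ∀ t ∈ Set.Icc a b, HasDerivAt u (u1 t) t := by
    intro t ht
    have h := (hasDerivAt_const t (1:ℂ)).div (hzd t) (hz0 t ht)
    have hfun : ((fun _ => (1:ℂ)) / z) = u := by
      funext v; simp [hudef, one_div]
    rw [hfun] at h
    refine h.congr_deriv ?_
    rw [hu1def]
    field_simp [hz0 t ht]
    ring
  have hden : ∀ t, HasDerivAt (fun t => (z t) ^ 2)
      (2 * z t * (-(Complex.I * (r t : ℂ)))) t := by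
    intro t
    have h := (hzd t).mul (hzd t)
    have hfun : (z * z) = fun t => z t ^ 2 := by
      funext v; simp only [Pi.mul_apply]; ring
    rw [hfun] at h
    refine h.congr_deriv ?_
    ring
  have hu1d : ∀ t ∈ Set.Icc a b, HasDerivAt u1 (u2 t) t := by
    intro t ht
    have h := (hrd t).div (hden t) (pow_ne_zero 2 (hz0 t ht))
    have h2 : HasDerivAt u1 ((Complex.I * (s t : ℂ) * z t ^ 2 -
        Complex.I * (r t : ℂ) * (2 * z t * (-(Complex.I * (r t : ℂ))))) / (z t ^ 2) ^ 2) t := h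
    convert h2 using 1
    rw [hu2def]
    field_simp [hz0 t ht]
    ring
  -- vector functions
  set w : ℝ → C3 := fun t => cmap (y1 t) with hwdef
  set w2 : ℝ → C3 := fun t => cmap (y2 t) with hw2def
  set w3 : ℝ → C3 := fun t => cmap (y3 t) with hw3def
  have hwd : ∀ t, HasDerivAt w (w2 t) t := fun t =>
    (cmapCLM.hasFDerivAt.comp_hasDerivAt t (hy1d t))
  have hw2d : ∀ t, HasDerivAt w2 (w3 t) t := fun t =>
    (cmapCLM.hasFDerivAt.comp_hasDerivAt t (hy2d t))
  set A1 : ℝ → C3 := fun t => u t • w2 t + u1 t • w t with hA1def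
  set A2 : ℝ → C3 := fun t => (u t • w3 t + u1 t • w2 t) + (u1 t • w2 t + u2 t • w t)
    with hA2def
  set B : ℝ → C3 := fun t => u t • A1 t with hBdef
  set B1 : ℝ → C3 := fun t => u t • A2 t + u1 t • A1 t with hB1def
  have hA1d : ∀ t ∈ Set.Icc a b, HasDerivAt A1 (A2 t) t := fun t ht =>
    ((hud t ht).smul (hw2d t)).add ((hu1d t ht).smul (hwd t))
  have hBd : ∀ t ∈ Set.Icc a b, HasDerivAt B (B1 t) t := fun t ht =>
    (hud t ht).smul (hA1d t ht)
  -- phase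
  set eψ : ℝ → ℂ := fun t => Complex.exp (Complex.I * (psi y p t : ℂ)) with heψdef
  have hψd : ∀ t, HasDerivAt (fun t => psi y p t) (q t) t := by
    intro t
    have h1 : HasDerivAt (fun t : ℝ => P * t) (P * 1) t := (hasDerivAt_id t).const_mul P
    have h2 : HasDerivAt (fun t => (inner ℝ p (y t) : ℝ)) ((inner ℝ p (y1 t) : ℝ)) t := by
      simpa using (hasDerivAt_const t p).inner ℝ (hyd t)
    have h := h1.sub h2
    simpa [psi, hqdef, mul_one, Pi.sub_def] using h
  have heψd : ∀ t, HasDerivAt eψ (eψ t * z t) t := by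
    intro t
    exact (((hψd t).ofReal_comp).const_mul Complex.I).cexp
  -- first primitive G and second primitive H
  set G : ℝ → C3 := fun t => eψ t • (u t • w t) with hGdef
  set H : ℝ → C3 := fun t => eψ t • B t with hHdef
  have hzu : ∀ t ∈ Set.Icc a b, z t * u t = 1 := fun t ht =>
    mul_inv_cancel₀ (hz0 t ht)
  have hGd : ∀ t ∈ Set.Icc a b, HasDerivAt G (eψ t • A1 t + eψ t • w t) t := by
    intro t ht
    have h := (heψd t).smul ((hud t ht).smul (hwd t))
    have he : (eψ t * z t) • (u t • w t) = eψ t • w t := by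
      rw [smul_smul, mul_assoc, mul_comm (z t) (u t), mul_comm (u t) (z t), hzu t ht, mul_one]
    rw [hGdef]
    rw [Pi.smul_apply', he] at h
    exact h
  have hHd : ∀ t ∈ Set.Icc a b, HasDerivAt H (eψ t • B1 t + eψ t • A1 t) t := by
    intro t ht
    have h := (heψd t).smul (hBd t ht)
    have he : (eψ t * z t) • B t = eψ t • A1 t := by
      rw [hBdef, smul_smul, mul_assoc, mul_comm (z t) (u t), mul_comm (u t) (z t), hzu t ht,
        mul_one]
    rw [hHdef]
    rw [he] at h
    exact h
  -- continuity
  have hqc : Continuous q := continuous_const.sub ((continuous_const.inner hy1c : _))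
  have hzc : Continuous z := continuous_const.mul (Complex.continuous_ofReal.comp hqc)
  have hrc : Continuous r := (continuous_const.inner hy2c : _)
  have hsc : Continuous s := (continuous_const.inner hy3c : _)
  have hwc : Continuous w := cmapCLM.continuous.comp hy1c
  have hw2c : Continuous w2 := cmapCLM.continuous.comp hy2c
  have hw3c : Continuous w3 := cmapCLM.continuous.comp hy3c
  have huc : ContinuousOn u (Set.Icc a b) := ContinuousOn.inv₀ hzc.continuousOn hz0
  have hu1c : ContinuousOn u1 (Set.Icc a b) := by
    apply ContinuousOn.div
    · exact (continuous_const.mul (Complex.continuous_ofReal.comp hrc)).continuousOn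
    · exact (hzc.pow 2).continuousOn
    · exact fun t ht => pow_ne_zero 2 (hz0 t ht)
  have hu2c : ContinuousOn u2 (Set.Icc a b) := by
    apply ContinuousOn.add
    · apply ContinuousOn.div
      · exact (continuous_const.mul (Complex.continuous_ofReal.comp hsc)).continuousOn
      · exact (hzc.pow 2).continuousOn
      · exact fun t ht => pow_ne_zero 2 (hz0 t ht)
    · apply ContinuousOn.div
      · exact (continuous_const.mul
          ((continuous_const.mul (Complex.continuous_ofReal.comp hrc)).pow 2)).continuousOn
      · exact (hzc.pow 3).continuousOn
      · exact fun t ht => pow_ne_zero 3 (hz0 t ht)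
  have heψc : Continuous eψ := by
    apply Complex.continuous_exp.comp
    apply continuous_const.mul
    exact Complex.continuous_ofReal.comp
      ((continuous_const.mul continuous_id).sub (continuous_const.inner hy.continuous : _))
  have hA1c : ContinuousOn A1 (Set.Icc a b) :=
    (huc.smul hw2c.continuousOn).add (hu1c.smul hwc.continuousOn)
  have hA2c : ContinuousOn A2 (Set.Icc a b) :=
    ((huc.smul hw3c.continuousOn).add (hu1c.smul hw2c.continuousOn)).add
      ((hu1c.smul hw2c.continuousOn).add (hu2c.smul hwc.continuousOn))
  have hB1c : ContinuousOn B1 (Set.Icc a b) :=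
    (huc.smul hA2c).add (hu1c.smul hA1c)
  -- interval integrability
  have hIccuIcc : Set.uIcc a b = Set.Icc a b := Set.uIcc_of_le hab
  have hIw : IntervalIntegrable (fun t => eψ t • w t) volume a b :=
    (heψc.smul hwc).intervalIntegrable a b
  have hIA1 : IntervalIntegrable (fun t => eψ t • A1 t) volume a b := by
    apply ContinuousOn.intervalIntegrable
    rw [hIccuIcc]
    exact heψc.continuousOn.smul hA1c
  have hIB1 : IntervalIntegrable (fun t => eψ t • B1 t) volume a b := by
    apply ContinuousOn.intervalIntegrable
    rw [hIccuIcc]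
    exact heψc.continuousOn.smul hB1c
  -- fundamental theorem of calculus, twice
  have hFTC1 : ∫ t in a..b, (eψ t • A1 t + eψ t • w t) = G b - G a := by
    apply intervalIntegral.integral_eq_sub_of_hasDerivAt
    · intro t ht
      exact hGd t (by rwa [hIccuIcc] at ht)
    · exact hIA1.add hIw
  have hFTC2 : ∫ t in a..b, (eψ t • B1 t + eψ t • A1 t) = H b - H a := by
    apply intervalIntegral.integral_eq_sub_of_hasDerivAt
    · intro t ht
      exact hHd t (by rwa [hIccuIcc] at ht)
    · exact hIB1.add hIA1
  have hsplit1 : (∫ t in a..b, eψ t • w t) = (G b - G a) - ∫ t in a..b, eψ t • A1 t := by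
    rw [← hFTC1, intervalIntegral.integral_add hIA1 hIw]
    abel
  have hsplit2 : (∫ t in a..b, eψ t • A1 t) = (H b - H a) - ∫ t in a..b, eψ t • B1 t := by
    rw [← hFTC2, intervalIntegral.integral_add hIB1 hIA1]
    abel
  have hGbdry : ∀ t, G t = bdry y p t := by
    intro t
    rw [hGdef, bdry]
  have hkey : (∫ t in a..b, Complex.exp (Complex.I * (psi y p t : ℂ)) • cmap (deriv y t))
      - (bdry y p b - bdry y p a)
      = -(H b - H a) + ∫ t in a..b, eψ t • B1 t := by
    have : (∫ t in a..b, Complex.exp (Complex.I * (psi y p t : ℂ)) • cmap (deriv y t))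
        = ∫ t in a..b, eψ t • w t := rfl
    rw [this, hsplit1, hsplit2, ← hGbdry a, ← hGbdry b]
    abel
  rw [hkey]
  -- basic nonnegativity
  have hPne : P ≠ 0 := hP.ne'
  have hiP : (0:ℝ) ≤ P⁻¹ := inv_nonneg.mpr hP.le
  have h1c : (0:ℝ) < 1/c := one_div_pos.mpr hc
  have heψ1 : ∀ t, ‖eψ t‖ = 1 := fun t => norm_eexp _
  -- scalar bounds
  have hbr : ∀ t ∈ Set.Icc a b, |r t| ≤ P * M₂ := by
    intro t ht
    exact (abs_real_inner_le_norm p (y2 t)).trans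
      (mul_le_mul_of_nonneg_left (hM₂ t ht) (norm_nonneg p))
  have hbs : ∀ t ∈ Set.Icc a b, |s t| ≤ P * M₃ := by
    intro t ht
    exact (abs_real_inner_le_norm p (y3 t)).trans
      (mul_le_mul_of_nonneg_left (hM₃ t ht) (norm_nonneg p))
  have hbu : ∀ t ∈ Set.Icc a b, ‖u t‖ ≤ (1/c) * P⁻¹ := by
    intro t ht
    rw [hudef]
    show ‖(z t)⁻¹‖ ≤ _
    rw [norm_inv, hznorm t ht]
    have h1 : (q t)⁻¹ ≤ (c * P)⁻¹ :=
      inv_anti₀ (mul_pos hc hP) (hql t ht)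
    calc (q t)⁻¹ ≤ (c * P)⁻¹ := h1
      _ = (1/c) * P⁻¹ := by field_simp
  have hbu1 : ∀ t ∈ Set.Icc a b, ‖u1 t‖ ≤ (M₂ / c ^ 2) * P⁻¹ := by
    intro t ht
    rw [hu1def]
    show ‖Complex.I * (r t : ℂ) / z t ^ 2‖ ≤ _
    rw [norm_div, norm_mul, Complex.norm_I, one_mul, Complex.norm_real, Real.norm_eq_abs,
      norm_pow, hznorm t ht]
    calc |r t| / q t ^ 2 ≤ (P * M₂) / (c * P) ^ 2 := by
          apply div_le_div₀ (by positivity) (hbr t ht) (by positivity)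
          exact pow_le_pow_left₀ (le_of_lt (mul_pos hc hP)) (hql t ht) 2
      _ = (M₂ / c ^ 2) * P⁻¹ := by field_simp
  have hbu2 : ∀ t ∈ Set.Icc a b, ‖u2 t‖ ≤ (M₃ / c ^ 2 + 2 * M₂ ^ 2 / c ^ 3) * P⁻¹ := by
    intro t ht
    rw [hu2def]
    show ‖Complex.I * (s t : ℂ) / z t ^ 2 + 2 * (Complex.I * (r t : ℂ)) ^ 2 / z t ^ 3‖ ≤ _
    have hn1 : ‖Complex.I * (s t : ℂ) / z t ^ 2‖ ≤ (M₃ / c ^ 2) * P⁻¹ := by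
      rw [norm_div, norm_mul, Complex.norm_I, one_mul, Complex.norm_real, Real.norm_eq_abs,
        norm_pow, hznorm t ht]
      calc |s t| / q t ^ 2 ≤ (P * M₃) / (c * P) ^ 2 := by
            apply div_le_div₀ (by positivity) (hbs t ht) (by positivity)
            exact pow_le_pow_left₀ (le_of_lt (mul_pos hc hP)) (hql t ht) 2
        _ = (M₃ / c ^ 2) * P⁻¹ := by field_simp
    have hn2 : ‖2 * (Complex.I * (r t : ℂ)) ^ 2 / z t ^ 3‖ ≤ (2 * M₂ ^ 2 / c ^ 3) * P⁻¹ := by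
      rw [norm_div, norm_mul, norm_pow, norm_mul, Complex.norm_I, one_mul, Complex.norm_real,
        Real.norm_eq_abs, norm_pow, hznorm t ht]
      have h2 : ‖(2:ℂ)‖ = 2 := by norm_num
      rw [h2]
      calc 2 * |r t| ^ 2 / q t ^ 3 ≤ 2 * (P * M₂) ^ 2 / (c * P) ^ 3 := by
            apply div_le_div₀ (by positivity)
              (mul_le_mul_of_nonneg_left
                (pow_le_pow_left₀ (abs_nonneg _) (hbr t ht) 2) (by norm_num))
              (by positivity)
            exact pow_le_pow_left₀ (le_of_lt (mul_pos hc hP)) (hql t ht) 3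
        _ = (2 * M₂ ^ 2 / c ^ 3) * P⁻¹ := by field_simp
    calc ‖_ + _‖ ≤ _ := norm_add_le _ _
      _ ≤ (M₃ / c ^ 2) * P⁻¹ + (2 * M₂ ^ 2 / c ^ 3) * P⁻¹ := add_le_add hn1 hn2
      _ = (M₃ / c ^ 2 + 2 * M₂ ^ 2 / c ^ 3) * P⁻¹ := by ring
  -- vector bounds
  have hbw : ∀ t ∈ Set.Icc a b, ‖w t‖ ≤ 1 := by
    intro t ht
    rw [hwdef]
    show ‖cmap (y1 t)‖ ≤ 1
    rw [cmap_norm]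
    exact (hv t ht).trans (le_of_lt hv₁)
  have hbw2 : ∀ t ∈ Set.Icc a b, ‖w2 t‖ ≤ M₂ := by
    intro t ht
    rw [hw2def]
    show ‖cmap (y2 t)‖ ≤ M₂
    rw [cmap_norm]; exact hM₂ t ht
  have hbw3 : ∀ t ∈ Set.Icc a b, ‖w3 t‖ ≤ M₃ := by
    intro t ht
    rw [hw3def]
    show ‖cmap (y3 t)‖ ≤ M₃
    rw [cmap_norm]; exact hM₃ t ht
  have hbA1 : ∀ t ∈ Set.Icc a b, ‖A1 t‖ ≤ a1 * P⁻¹ := by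
    intro t ht
    rw [hA1def]
    show ‖u t • w2 t + u1 t • w t‖ ≤ _
    calc ‖u t • w2 t + u1 t • w t‖ ≤ ‖u t • w2 t‖ + ‖u1 t • w t‖ := norm_add_le _ _
      _ = ‖u t‖ * ‖w2 t‖ + ‖u1 t‖ * ‖w t‖ := by rw [norm_smul, norm_smul]
      _ ≤ ((1/c) * P⁻¹) * M₂ + ((M₂ / c ^ 2) * P⁻¹) * 1 := by
          apply add_le_add
          · exact mul_le_mul (hbu t ht) (hbw2 t ht) (norm_nonneg _)
              (mul_nonneg h1c.le hiP)
          · exact mul_le_mul (hbu1 t ht) (hbw t ht) (norm_nonneg _)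
              (mul_nonneg (by positivity) hiP)
      _ = a1 * P⁻¹ := by rw [ha1def]; field_simp; ring
  have hbA2 : ∀ t ∈ Set.Icc a b, ‖A2 t‖ ≤ a2 * P⁻¹ := by
    intro t ht
    rw [hA2def]
    show ‖(u t • w3 t + u1 t • w2 t) + (u1 t • w2 t + u2 t • w t)‖ ≤ _
    have h1 : ‖u t • w3 t‖ ≤ ((1/c) * P⁻¹) * M₃ := by
      rw [norm_smul]
      exact mul_le_mul (hbu t ht) (hbw3 t ht) (norm_nonneg _) (mul_nonneg h1c.le hiP)
    have h2 : ‖u1 t • w2 t‖ ≤ ((M₂ / c ^ 2) * P⁻¹) * M₂ := by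
      rw [norm_smul]
      exact mul_le_mul (hbu1 t ht) (hbw2 t ht) (norm_nonneg _) (mul_nonneg (by positivity) hiP)
    have h3 : ‖u2 t • w t‖ ≤ ((M₃ / c ^ 2 + 2 * M₂ ^ 2 / c ^ 3) * P⁻¹) * 1 := by
      rw [norm_smul]
      exact mul_le_mul (hbu2 t ht) (hbw t ht) (norm_nonneg _)
        (mul_nonneg (by positivity) hiP)
    calc ‖(u t • w3 t + u1 t • w2 t) + (u1 t • w2 t + u2 t • w t)‖
        ≤ (‖u t • w3 t‖ + ‖u1 t • w2 t‖) + (‖u1 t • w2 t‖ + ‖u2 t • w t‖) :=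
          (norm_add_le _ _).trans (add_le_add (norm_add_le _ _) (norm_add_le _ _))
      _ ≤ (((1/c) * P⁻¹) * M₃ + ((M₂ / c ^ 2) * P⁻¹) * M₂)
          + (((M₂ / c ^ 2) * P⁻¹) * M₂ + ((M₃ / c ^ 2 + 2 * M₂ ^ 2 / c ^ 3) * P⁻¹) * 1) :=
          add_le_add (add_le_add h1 h2) (add_le_add h2 h3)
      _ = a2 * P⁻¹ := by rw [ha2def]; field_simp; ring
  have hbB : ∀ t ∈ Set.Icc a b, ‖B t‖ ≤ (a1 / c) * (P⁻¹ * P⁻¹) := by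
    intro t ht
    rw [hBdef]
    show ‖u t • A1 t‖ ≤ _
    rw [norm_smul]
    calc ‖u t‖ * ‖A1 t‖ ≤ ((1/c) * P⁻¹) * (a1 * P⁻¹) :=
          mul_le_mul (hbu t ht) (hbA1 t ht) (norm_nonneg _) (mul_nonneg h1c.le hiP)
      _ = (a1 / c) * (P⁻¹ * P⁻¹) := by ring
  have hbB1 : ∀ t ∈ Set.Icc a b, ‖B1 t‖ ≤ bb * (P⁻¹ * P⁻¹) := by
    intro t ht
    rw [hB1def]
    show ‖u t • A2 t + u1 t • A1 t‖ ≤ _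
    calc ‖u t • A2 t + u1 t • A1 t‖ ≤ ‖u t‖ * ‖A2 t‖ + ‖u1 t‖ * ‖A1 t‖ := by
          rw [← norm_smul, ← norm_smul]; exact norm_add_le _ _
      _ ≤ ((1/c) * P⁻¹) * (a2 * P⁻¹) + ((M₂ / c ^ 2) * P⁻¹) * (a1 * P⁻¹) := by
          apply add_le_add
          · exact mul_le_mul (hbu t ht) (hbA2 t ht) (norm_nonneg _) (mul_nonneg h1c.le hiP)
          · exact mul_le_mul (hbu1 t ht) (hbA1 t ht) (norm_nonneg _)
              (mul_nonneg (by positivity) hiP)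
      _ = bb * (P⁻¹ * P⁻¹) := by rw [hbbdef]; field_simp; ring
  -- assembling
  have hHb : ∀ t ∈ Set.Icc a b, ‖H t‖ ≤ (a1 / c) * (P⁻¹ * P⁻¹) := by
    intro t ht
    rw [hHdef]
    show ‖eψ t • B t‖ ≤ _
    rw [norm_smul, heψ1 t, one_mul]
    exact hbB t ht
  have hInt : ‖∫ t in a..b, eψ t • B1 t‖ ≤ (bb * (P⁻¹ * P⁻¹)) * |b - a| := by
    apply intervalIntegral.norm_integral_le_of_norm_le_const
    intro t ht
    have ht' : t ∈ Set.Icc a b := Set.Ioc_subset_Icc_self (by rwa [Set.uIoc_of_le hab] at ht)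
    rw [norm_smul, heψ1 t, one_mul]
    exact hbB1 t ht'
  have hmema : a ∈ Set.Icc a b := ⟨le_refl a, hab⟩
  have hmemb : b ∈ Set.Icc a b := ⟨hab, le_refl b⟩
  calc ‖-(H b - H a) + ∫ t in a..b, eψ t • B1 t‖
      ≤ ‖-(H b - H a)‖ + ‖∫ t in a..b, eψ t • B1 t‖ := norm_add_le _ _
    _ = ‖H b - H a‖ + ‖∫ t in a..b, eψ t • B1 t‖ := by rw [norm_neg]
    _ ≤ (‖H b‖ + ‖H a‖) + ‖∫ t in a..b, eψ t • B1 t‖ :=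
        add_le_add_left (norm_sub_le _ _) _
    _ ≤ ((a1 / c) * (P⁻¹ * P⁻¹) + (a1 / c) * (P⁻¹ * P⁻¹))
        + (bb * (P⁻¹ * P⁻¹)) * |b - a| :=
        add_le_add (add_le_add (hHb b hmemb) (hHb a hmema)) hInt
    _ = (2 * (a1 / c) + (b - a) * bb) / P ^ 2 := by
        rw [_root_.abs_of_nonneg (by linarith : (0:ℝ) ≤ b - a)]
        field_simp
        ring

lemma finrank_E3 : Module.finrank ℝ E3 = 3 := by simp

lemma ball_lintegral {D : ℝ} (hD : 0 < D) :
    ∫⁻ p in Metric.closedBall (0:E3) 1, ENNReal.ofReal (D / ‖p‖) < ⊤ := by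
  set μ := (volume : Measure E3).restrict (Metric.closedBall (0:E3) 1) with hμ
  set V := (volume : Measure E3) (Metric.closedBall (0:E3) 1) with hV
  set Vb := (volume : Measure E3) (Metric.ball (0:E3) 1) with hVb
  have hVfin : V < ⊤ := (isCompact_closedBall _ _).measure_lt_top
  have hVbfin : Vb < ⊤ := lt_of_le_of_lt (measure_mono Metric.ball_subset_closedBall) hVfin
  have hmble : AEMeasurable (fun p : E3 => D / ‖p‖) μ :=
    (measurable_const.div measurable_norm).aemeasurable
  have hnn : 0 ≤ᵐ[μ] fun p : E3 => D / ‖p‖ :=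
    Filter.Eventually.of_forall (fun p => div_nonneg hD.le (norm_nonneg p))
  rw [show (∫⁻ p in Metric.closedBall (0:E3) 1, ENNReal.ofReal (D / ‖p‖))
      = ∫⁻ p, ENNReal.ofReal (D / ‖p‖) ∂μ from rfl]
  rw [lintegral_eq_lintegral_meas_lt μ hnn hmble]
  have hsub : ∀ t : ℝ, 0 < t → {p : E3 | t < D / ‖p‖} ⊆ Metric.closedBall 0 (D / t) := by
    intro t ht p hp
    simp only [Set.mem_setOf_eq] at hp
    have hnp : 0 < ‖p‖ := by
      by_contra h
      push_neg at h
      have h0 : ‖p‖ = 0 := le_antisymm h (norm_nonneg p)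
      rw [h0, div_zero] at hp
      linarith
    rw [mem_closedBall_zero_iff]
    have h1 : t * ‖p‖ < D := (lt_div_iff₀ hnp).mp hp
    have h2 : ‖p‖ * t < D := by rwa [mul_comm] at h1
    exact le_of_lt ((lt_div_iff₀ ht).mpr h2)
  have hmeas_le : ∀ t : ℝ, μ {p : E3 | t < D / ‖p‖} ≤ V := by
    intro t
    rw [hμ, Measure.restrict_apply' measurableSet_closedBall]
    exact measure_mono Set.inter_subset_right
  have hmeas_le2 : ∀ t : ℝ, 0 < t → μ {p : E3 | t < D / ‖p‖}
      ≤ ENNReal.ofReal (D ^ 3 * t ^ (-3:ℝ)) * Vb := by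
    intro t ht
    calc μ {p : E3 | t < D / ‖p‖} ≤ volume (Metric.closedBall (0:E3) (D / t)) := by
          rw [hμ, Measure.restrict_apply' measurableSet_closedBall]
          exact measure_mono ((Set.inter_subset_left).trans (hsub t ht))
      _ = ENNReal.ofReal ((D / t) ^ Module.finrank ℝ E3) * Vb :=
          Measure.addHaar_closedBall _ _ (by positivity)
      _ = ENNReal.ofReal (D ^ 3 * t ^ (-3:ℝ)) * Vb := by
          rw [finrank_E3]
          congr 1
          have h3 : t ^ (-3:ℝ) = (t ^ (3:ℕ))⁻¹ := by
            rw [show (-3:ℝ) = -((3:ℕ):ℝ) by norm_num, Real.rpow_neg ht.le,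
              Real.rpow_natCast]
          rw [h3, div_pow, div_eq_mul_inv]
  have hsplit : Set.Ioi (0:ℝ) = Set.Ioc 0 D ∪ Set.Ioi D := (Set.Ioc_union_Ioi_eq_Ioi hD.le).symm
  rw [hsplit, lintegral_union measurableSet_Ioi (Set.Ioc_disjoint_Ioi le_rfl)]
  apply ENNReal.add_lt_top.mpr
  constructor
  · calc ∫⁻ t in Set.Ioc (0:ℝ) D, μ {p : E3 | t < D / ‖p‖}
        ≤ ∫⁻ _ in Set.Ioc (0:ℝ) D, V := lintegral_mono (fun t => hmeas_le t)
      _ = V * volume (Set.Ioc (0:ℝ) D) := setLIntegral_const _ _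
      _ < ⊤ := ENNReal.mul_lt_top hVfin (by rw [Real.volume_Ioc]; exact ENNReal.ofReal_lt_top)
  · have hInt : IntegrableOn (fun t : ℝ => D ^ 3 * t ^ (-3:ℝ)) (Set.Ioi D) := by
      exact (integrableOn_Ioi_rpow_of_lt (by norm_num) hD).const_mul (D ^ 3)
    calc ∫⁻ t in Set.Ioi D, μ {p : E3 | t < D / ‖p‖}
        ≤ ∫⁻ t in Set.Ioi D, ENNReal.ofReal (D ^ 3 * t ^ (-3:ℝ)) * Vb := by
          apply lintegral_mono_ae
          filter_upwards [ae_restrict_mem measurableSet_Ioi] with t ht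
          exact hmeas_le2 t (lt_trans hD ht)
      _ = (∫⁻ t in Set.Ioi D, ENNReal.ofReal (D ^ 3 * t ^ (-3:ℝ))) * Vb :=
          lintegral_mul_const' Vb _ hVbfin.ne
      _ < ⊤ := ENNReal.mul_lt_top hInt.lintegral_lt_top hVbfin


set_option maxHeartbeats 1000000 in
/-- a jump in the acceleration `x''` at `t = 0` (with matching position and
velocity) does not spoil the decay `|J(p)| ≤ C/|p|²` nor the square integrability of `J`
with respect to `dp/(2|p|)`. -/
theorem Jrad_decay_with_acceleration_jump
    (xm xp : ℝ → E3) (hxm : ContDiff ℝ 3 xm) (hxp : ContDiff ℝ 3 xp)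
    (hpos : xm 0 = xp 0) (hvel : deriv xm 0 = deriv xp 0)
    (x : ℝ → E3)
    (hxneg : ∀ t : ℝ, t ≤ 0 → x t = xm t) (hxpos : ∀ t : ℝ, 0 ≤ t → x t = xp t)
    (hsupp : HasCompactSupport (deriv x))
    (v₀ : ℝ) (hv₀ : v₀ < 1) (hbd : ∀ t, ‖deriv x t‖ ≤ v₀) :
    (∃ C : ℝ, ∀ p : E3, 1 ≤ ‖p‖ → ‖Jrad x p‖ ≤ C / ‖p‖^2) ∧
    (∫⁻ p : E3, ENNReal.ofReal (‖Jrad x p‖^2 / (2 * ‖p‖)) < ⊤) := by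

  -- derivative facts about x
  have hxmd : Differentiable ℝ xm := hxm.differentiable (by norm_num)
  have hxpd : Differentiable ℝ xp := hxp.differentiable (by norm_num)
  have hd0 : HasDerivAt x (deriv xp 0) 0 := by
    have hm : HasDerivWithinAt x (deriv xp 0) (Set.Iic 0) 0 := by
      have h := ((hxmd 0).hasDerivAt.hasDerivWithinAt (s := Set.Iic 0))
      rw [hvel] at h
      exact h.congr (fun y hy => hxneg y hy) (hxneg 0 le_rfl)
    have hq : HasDerivWithinAt x (deriv xp 0) (Set.Ici 0) 0 :=
      ((hxpd 0).hasDerivAt.hasDerivWithinAt (s := Set.Ici 0)).congr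
        (fun y hy => hxpos y hy) (hxpos 0 le_rfl)
    have h := hm.union hq
    rw [Set.Iic_union_Ici] at h
    exact hasDerivWithinAt_univ.mp h
  have hdxm : ∀ t : ℝ, t ≤ 0 → deriv x t = deriv xm t := by
    intro t ht
    rcases lt_or_eq_of_le ht with h | h
    · have he : x =ᶠ[nhds t] xm := by
        filter_upwards [Iio_mem_nhds h] with u hu using hxneg u (le_of_lt hu)
      exact he.deriv_eq
    · rw [h, hd0.deriv, hvel]
  have hdxp : ∀ t : ℝ, 0 ≤ t → deriv x t = deriv xp t := by
    intro t ht
    rcases lt_or_eq_of_le ht with h | h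
    · have he : x =ᶠ[nhds t] xp := by
        filter_upwards [Ioi_mem_nhds h] with u hu using hxpos u (le_of_lt hu)
      exact he.deriv_eq
    · rw [← h, hd0.deriv]
  have hdxmc : Continuous (deriv xm) :=
    (((contDiff_succ_iff_deriv (n := 2)).mp (by exact_mod_cast hxm)).2.2).continuous
  have hdxpc : Continuous (deriv xp) :=
    (((contDiff_succ_iff_deriv (n := 2)).mp (by exact_mod_cast hxp)).2.2).continuous
  have hdx_eq : deriv x = fun t => if t ≤ 0 then deriv xm t else deriv xp t := by
    funext t
    by_cases h : t ≤ 0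
    · rw [if_pos h]; exact hdxm t h
    · rw [if_neg h]; push_neg at h; exact hdxp t h.le
  have hdxc : Continuous (deriv x) := by
    rw [hdx_eq]
    apply Continuous.if_le hdxmc hdxpc continuous_id continuous_const
    intro t ht
    rw [show t = 0 from ht, hvel]
  have hxc : Continuous x := by
    have hx_eq : x = fun t => if t ≤ 0 then xm t else xp t := by
      funext t
      by_cases h : t ≤ 0
      · rw [if_pos h]; exact hxneg t h
      · rw [if_neg h]; push_neg at h; exact hxpos t h.le
    rw [hx_eq]
    apply Continuous.if_le hxm.continuous hxp.continuous continuous_id continuous_const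
    intro t ht
    rw [show t = 0 from ht, hpos]
  -- support radius
  obtain ⟨R, hR⟩ := (hsupp.isBounded).subset_closedBall 0
  set b₀ : ℝ := max R 0 + 1 with hb₀def
  have hb₀ : (0:ℝ) < b₀ := by
    have : (0:ℝ) ≤ max R 0 := le_max_right _ _
    linarith
  have hdx0 : ∀ t : ℝ, b₀ ≤ |t| → deriv x t = 0 := by
    intro t ht
    apply image_eq_zero_of_notMem_tsupport
    intro hmem
    have h1 := hR hmem
    rw [Metric.mem_closedBall, Real.dist_eq, sub_zero] at h1
    have h2 : max R 0 ≤ |t| - 1 := by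
      have := le_max_left R 0
      rw [hb₀def] at ht
      linarith
    have := le_max_left R 0
    linarith
  -- bounds on deriv xm, deriv xp on intervals
  have hvm : ∀ t ∈ Set.Icc (-b₀) 0, ‖deriv xm t‖ ≤ v₀ := by
    intro t ht
    rw [← hdxm t ht.2]
    exact hbd t
  have hvp : ∀ t ∈ Set.Icc 0 b₀, ‖deriv xp t‖ ≤ v₀ := by
    intro t ht
    rw [← hdxp t ht.1]
    exact hbd t
  obtain ⟨K₁, hK₁0, hK₁⟩ := key xm hxm (-b₀) 0 (by linarith) v₀ hv₀ hvm
  obtain ⟨K₂, hK₂0, hK₂⟩ := key xp hxp 0 b₀ hb₀.le v₀ hv₀ hvp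
  -- boundary values
  have hderxm : deriv xm (-b₀) = 0 := by
    rw [← hdxm (-b₀) (by linarith)]
    exact hdx0 _ (by rw [abs_neg, abs_of_pos hb₀])
  have hderxp : deriv xp b₀ = 0 := by
    rw [← hdxp b₀ hb₀.le]
    exact hdx0 _ (by rw [abs_of_pos hb₀])
  have hbm : ∀ p : E3, bdry xm p (-b₀) = 0 := by
    intro p
    rw [bdry, hderxm, cmap_zero, smul_zero, smul_zero]
  have hbp : ∀ p : E3, bdry xp p b₀ = 0 := by
    intro p
    rw [bdry, hderxp, cmap_zero, smul_zero, smul_zero]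
  have hb00 : ∀ p : E3, bdry xm p 0 = bdry xp p 0 := by
    intro p
    simp only [bdry, psi, hpos, hvel]
  -- Part 1
  have hpart1 : ∀ p : E3, 1 ≤ ‖p‖ → ‖Jrad x p‖ ≤ (K₁ + K₂) / ‖p‖ ^ 2 := by
    intro p hp
    set f : ℝ → C3 := fun t => Complex.exp (Complex.I * (psi x p t : ℂ)) • cmap (deriv x t)
      with hfdef
    have hfc : Continuous f := by
      apply Continuous.fun_smul
      · apply Complex.continuous_exp.comp
        apply continuous_const.mul
        apply Complex.continuous_ofReal.comp
        exact (continuous_const.mul continuous_id).sub (continuous_const.inner hxc : _)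
      · exact (cmapCLM.continuous.comp hdxc).congr fun t => by
          simp [Function.comp]
    have hzero : ∀ t : ℝ, t ∉ Set.Ioc (-b₀) b₀ → f t = 0 := by
      intro t ht
      rw [Set.mem_Ioc, not_and_or] at ht
      have habs : b₀ ≤ |t| := by
        rcases ht with h | h
        · push_neg at h
          rw [abs_of_nonpos (by linarith)]
          linarith
        · push_neg at h
          rw [abs_of_pos (by linarith)]
          linarith
      rw [hfdef]
      simp only
      rw [hdx0 t habs, cmap_zero, smul_zero]
    have hJ : Jrad x p = ∫ t in (-b₀)..b₀, f t := by
      rw [Jrad, intervalIntegral.integral_of_le (by linarith),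
        setIntegral_eq_integral_of_forall_compl_eq_zero hzero]
    have hIm : IntervalIntegrable f volume (-b₀) 0 := hfc.intervalIntegrable _ _
    have hIp : IntervalIntegrable f volume 0 b₀ := hfc.intervalIntegrable _ _
    have hsplit : ∫ t in (-b₀)..b₀, f t = (∫ t in (-b₀)..(0:ℝ), f t) + ∫ t in (0:ℝ)..b₀, f t :=
      (intervalIntegral.integral_add_adjacent_intervals hIm hIp).symm
    have hcongrm : ∫ t in (-b₀)..(0:ℝ), f t
        = ∫ t in (-b₀)..(0:ℝ), Complex.exp (Complex.I * (psi xm p t : ℂ)) • cmap (deriv xm t) := by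
      apply intervalIntegral.integral_congr
      intro t ht
      rw [Set.uIcc_of_le (by linarith : -b₀ ≤ (0:ℝ))] at ht
      rw [hfdef]
      simp only [psi, hxneg t ht.2, hdxm t ht.2]
    have hcongrp : ∫ t in (0:ℝ)..b₀, f t
        = ∫ t in (0:ℝ)..b₀, Complex.exp (Complex.I * (psi xp p t : ℂ)) • cmap (deriv xp t) := by
      apply intervalIntegral.integral_congr
      intro t ht
      rw [Set.uIcc_of_le hb₀.le] at ht
      rw [hfdef]
      simp only [psi, hxpos t ht.1, hdxp t ht.1]
    have e1 := hK₁ p hp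
    have e2 := hK₂ p hp
    rw [hbm p, sub_zero] at e1
    rw [hbp p, zero_sub, sub_neg_eq_add] at e2
    have hJsum : Jrad x p =
        ((∫ t in (-b₀)..(0:ℝ), Complex.exp (Complex.I * (psi xm p t : ℂ)) • cmap (deriv xm t))
          - bdry xm p 0)
        + ((∫ t in (0:ℝ)..b₀, Complex.exp (Complex.I * (psi xp p t : ℂ)) • cmap (deriv xp t))
          + bdry xp p 0) := by
      rw [hJ, hsplit, hcongrm, hcongrp, hb00 p]
      abel
    rw [hJsum]
    calc ‖_ + _‖ ≤ _ := norm_add_le _ _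
      _ ≤ K₁ / ‖p‖ ^ 2 + K₂ / ‖p‖ ^ 2 := add_le_add e1 e2
      _ = (K₁ + K₂) / ‖p‖ ^ 2 := (add_div _ _ _).symm
  refine ⟨⟨K₁ + K₂, hpart1⟩, ?_⟩
  -- Part 2
  set C : ℝ := K₁ + K₂ with hCdef
  have hC0 : 0 ≤ C := add_nonneg hK₁0 hK₂0
  set L : ℝ := ∫ t : ℝ, ‖deriv x t‖ with hLdef
  have hL0 : 0 ≤ L := integral_nonneg (fun t => norm_nonneg _)
  have hJle : ∀ p : E3, ‖Jrad x p‖ ≤ L := by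
    intro p
    rw [Jrad]
    refine (norm_integral_le_integral_norm _).trans (le_of_eq ?_)
    rw [hLdef]
    congr 1
    funext t
    rw [norm_smul, norm_eexp, one_mul, cmap_norm]
  set D : ℝ := L ^ 2 / 2 + 1 with hDdef
  have hD : (0:ℝ) < D := by positivity
  set g₁ : E3 → ENNReal := fun p => ENNReal.ofReal (D / ‖p‖) with hg₁
  set g₂ : E3 → ENNReal := fun p =>
    ENNReal.ofReal ((16 * C ^ 2) * ((1 + ‖p‖) ^ (5:ℕ))⁻¹) with hg₂
  set S := Metric.closedBall (0:E3) 1 with hSdef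
  have hdom : ∀ p : E3, ENNReal.ofReal (‖Jrad x p‖ ^ 2 / (2 * ‖p‖))
      ≤ S.indicator g₁ p + Sᶜ.indicator g₂ p := by
    intro p
    by_cases hp : p ∈ S
    · rw [Set.indicator_of_mem hp, Set.indicator_of_notMem (Set.notMem_compl_iff.mpr hp),
        add_zero]
      apply ENNReal.ofReal_le_ofReal
      by_cases h0 : ‖p‖ = 0
      · simp [h0]
      · have hpn : (0:ℝ) < ‖p‖ := lt_of_le_of_ne (norm_nonneg p) (Ne.symm h0)
        have h2D : ‖Jrad x p‖ ^ 2 ≤ 2 * D := by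
          have h1 : ‖Jrad x p‖ ^ 2 ≤ L ^ 2 := pow_le_pow_left₀ (norm_nonneg _) (hJle p) 2
          have h2 : 2 * D = L ^ 2 + 2 := by rw [hDdef]; ring
          linarith
        calc ‖Jrad x p‖ ^ 2 / (2 * ‖p‖) ≤ (2 * D) / (2 * ‖p‖) :=
              div_le_div₀ (by linarith) h2D (by linarith) le_rfl
          _ = D / ‖p‖ := mul_div_mul_left _ _ two_ne_zero
    · rw [Set.indicator_of_notMem hp, Set.indicator_of_mem (Set.mem_compl hp), zero_add]
      have h1 : (1:ℝ) < ‖p‖ := by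
        rw [hSdef, Metric.mem_closedBall, dist_zero_right] at hp
        push_neg at hp
        exact hp
      have hp0 : (0:ℝ) < ‖p‖ := lt_trans one_pos h1
      have hJp := hpart1 p h1.le
      apply ENNReal.ofReal_le_ofReal
      have hb1 : ‖Jrad x p‖ ^ 2 ≤ (C / ‖p‖ ^ 2) ^ 2 := pow_le_pow_left₀ (norm_nonneg _) hJp 2
      have hden : (0:ℝ) < 2 * ‖p‖ := by linarith
      have hb2 : ‖Jrad x p‖ ^ 2 / (2 * ‖p‖) ≤ C ^ 2 / (2 * ‖p‖ ^ 5) := by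
        calc ‖Jrad x p‖ ^ 2 / (2 * ‖p‖) ≤ (C / ‖p‖ ^ 2) ^ 2 / (2 * ‖p‖) :=
              div_le_div₀ (by positivity) hb1 hden le_rfl
          _ = C ^ 2 / (2 * ‖p‖ ^ 5) := by
              rw [div_pow, div_div]
              congr 1
              ring
      refine hb2.trans ?_
      rw [← div_eq_mul_inv]
      have h2 : (1 + ‖p‖) ^ (5:ℕ) ≤ 32 * ‖p‖ ^ 5 := by
        have hle : 1 + ‖p‖ ≤ 2 * ‖p‖ := by linarith
        calc (1 + ‖p‖) ^ (5:ℕ) ≤ (2 * ‖p‖) ^ (5:ℕ) :=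
              pow_le_pow_left₀ (by linarith) hle 5
          _ = 32 * ‖p‖ ^ 5 := by ring
      have h3 : (0:ℝ) < (1 + ‖p‖) ^ (5:ℕ) := by positivity
      rw [div_le_div_iff₀ (by positivity) h3]
      calc C ^ 2 * (1 + ‖p‖) ^ (5:ℕ) ≤ C ^ 2 * (32 * ‖p‖ ^ 5) :=
            mul_le_mul_of_nonneg_left h2 (sq_nonneg C)
        _ = 16 * C ^ 2 * (2 * ‖p‖ ^ 5) := by ring
  have hmg₁ : Measurable g₁ := (measurable_const.div measurable_norm).ennreal_ofReal
  have hmg₂ : Measurable g₂ := by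
    apply Measurable.ennreal_ofReal
    apply Measurable.const_mul
    exact ((measurable_const.add measurable_norm).pow_const (5:ℕ)).inv
  calc ∫⁻ p : E3, ENNReal.ofReal (‖Jrad x p‖ ^ 2 / (2 * ‖p‖))
      ≤ ∫⁻ p : E3, (S.indicator g₁ p + Sᶜ.indicator g₂ p) := lintegral_mono hdom
    _ = (∫⁻ p in S, g₁ p) + ∫⁻ p in Sᶜ, g₂ p := by
        rw [lintegral_add_left (hmg₁.indicator measurableSet_closedBall),
          lintegral_indicator measurableSet_closedBall g₁,
          lintegral_indicator measurableSet_closedBall.compl g₂]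
    _ < ⊤ := by
        apply ENNReal.add_lt_top.mpr
        constructor
        · exact ball_lintegral hD
        · calc ∫⁻ p in Sᶜ, g₂ p ≤ ∫⁻ p : E3, g₂ p := setLIntegral_le_lintegral _ _
            _ < ⊤ := by
              have hint : Integrable (fun p : E3 => (16 * C ^ 2) * (1 + ‖p‖) ^ (-(5:ℝ))) :=
                (integrable_one_add_norm (E := E3) (r := 5)
                  (by rw [finrank_E3]; norm_num)).const_mul _
              have heq : ∀ p : E3, ((1 + ‖p‖) ^ (5:ℕ))⁻¹ = (1 + ‖p‖) ^ (-(5:ℝ)) := by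
                intro p
                rw [show (-(5:ℝ)) = -((5:ℕ):ℝ) by norm_num,
                  Real.rpow_neg (by positivity), Real.rpow_natCast]
              simp only [hg₂, heq]
              exact hint.lintegral_lt_top
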